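/- Let r : [0,∞) → ℝ be differentiable with r(0) ≥ α(0), and suppose r'(τ) ≥ α'(τ) whenever r(τ) ≤ R(τ) + α(τ), where R(τ) ≥ 0 and α is differentiable. Then r(τ) ≥ α(τ) for all τ ≥ 0. -/

import Mathlib

/-!
Write `g = r - α`. Since `R ≥ 0`, the hypothesis forces `g' ≥ 0` wherever `g < 0`, so `g` can
never cross below zero. Quantitatively, `-g` stays below every barrier `ε (1 + τ)`: at a first
contact `-g = ε (1 + τ) > 0`, hence `(-g)' ≤ 0 < ε`, which the fencing theorem excludes.
-/

theorem nonneg_of_hasDerivAt_of_deriv_nonneg_of_neg {g g' : ℝ → ℝ} {a : ℝ}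
    (hg : ∀ x, a ≤ x → HasDerivAt g (g' x) x) (ha : 0 ≤ g a)
    (hg' : ∀ x, a ≤ x → g x < 0 → 0 ≤ g' x) {x : ℝ} (hx : a ≤ x) : 0 ≤ g x := by
  have barrier : ∀ ε > 0, -g x ≤ ε * (1 + (x - a)) := by
    intro ε hε
    refine image_le_of_deriv_right_lt_deriv_boundary (f := fun y => -g y) (f' := fun y => -g' y)
      (B := fun y => ε * (1 + (y - a))) (B' := fun _ => ε) ?_ ?_ ?_ ?_ ?_ ⟨hx, le_rfl⟩
    · exact fun y hy => (hg y hy.1).continuousAt.neg.continuousWithinAt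
    · exact fun y hy => (hg y hy.1).neg.hasDerivWithinAt
    · simp only [sub_self, add_zero, mul_one]
      linarith
    · intro y
      simpa using (((hasDerivAt_id y).sub_const a).const_add 1).const_mul ε
    · intro y hy hcontact
      have hgy : g y < 0 := by nlinarith [hy.1]
      linarith [hg' y hy.1 hgy]
  by_contra! hneg
  have hpos : 0 < 1 + (x - a) := by linarith
  have half := barrier (-g x / (2 * (1 + (x - a)))) (div_pos (neg_pos.2 hneg) (by positivity))
  rw [div_mul_eq_mul_div, mul_div_mul_right _ _ hpos.ne'] at half
  linarith

theorem stmt_9_general (r α r' α' : ℝ → ℝ) (R : ℝ → ℝ)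
    (hrd : ∀ τ : ℝ, 0 ≤ τ → HasDerivAt r (r' τ) τ)
    (hαd : ∀ τ : ℝ, 0 ≤ τ → HasDerivAt α (α' τ) τ)
    (hRpos : ∀ τ : ℝ, 0 ≤ τ → 0 ≤ R τ)
    (h0 : α 0 ≤ r 0)
    (hcond : ∀ τ : ℝ, 0 ≤ τ → r τ ≤ R τ + α τ → α' τ ≤ r' τ) :
    ∀ τ : ℝ, 0 ≤ τ → α τ ≤ r τ := by
  intro τ hτ
  have hgap : 0 ≤ r τ - α τ :=
    nonneg_of_hasDerivAt_of_deriv_nonneg_of_neg (g := fun x => r x - α x)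
      (fun x hx => (hrd x hx).sub (hαd x hx)) (sub_nonneg.2 h0)
      (fun x hx hneg => sub_nonneg.2 (hcond x hx (by linarith [hRpos x hx]))) hτ
  exact sub_nonneg.1 hgap

theorem stmt_9 (r α r' α' : ℝ → ℝ) (R : ℝ → ℝ)
    (hrd : ∀ τ : ℝ, 0 ≤ τ → HasDerivAt r (r' τ) τ)
    (hαd : ∀ τ : ℝ, 0 ≤ τ → HasDerivAt α (α' τ) τ)
    (hRcont : Continuous R)
    (hRpos : ∀ τ : ℝ, 0 ≤ τ → 0 ≤ R τ)
    (h0 : α 0 ≤ r 0)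
    (hcond : ∀ τ : ℝ, 0 ≤ τ → r τ ≤ R τ + α τ → α' τ ≤ r' τ) :
    ∀ τ : ℝ, 0 ≤ τ → α τ ≤ r τ :=
  stmt_9_general r α r' α' R hrd hαd hRpos h0 hcond
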